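/- arXiv:0706.3472 — 3 statements merged into one kernel-verified Lean document; each statement's English description precedes it below -/
import Mathlib

section
/- Let 𝒜 be an indexing collection on a locally compact metric space T with Radon measure m, let H ∈ (0, 1/2], and let B^H be a set-indexed fractional Brownian motion of index H on (T, 𝒜, m). Let f : [a,b] → 𝒜 be an elementary flow, let θ(t) = m(f(t)), and let θ^{-1} be the pseudo-inverse of θ (so that θ(θ^{-1}(t)) = t for all t ∈ [θ(a), θ(b)]). Then the m-standard projection t ↦ B^H_{f(θ^{-1}(t))}, t ∈ [θ(a), θ(b)], is a one-parameter fractional Brownian motion of Hurst index H, i.e. a centered Gaussian process with covariance E[B^H_{f(θ^{-1}(s))} · B^H_{f(θ^{-1}(t))}] = ½ (s^{2H} + t^{2H} − |t − s|^{2H}) for all s, t ∈ [θ(a), θ(b)]. -/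
open Set MeasureTheory ProbabilityTheory Filter
open scoped NNReal ENNReal symmDiff

noncomputable section

/-- The class of finite unions of sets from a class `𝒜` (the empty union gives `∅`),
denoted `𝒜(u)` in the paper. -/
def finUnions {T : Type*} (𝒜 : Set (Set T)) : Set (Set T) :=
  {B | ∃ (n : ℕ) (f : Fin n → Set T), (∀ i, f i ∈ 𝒜) ∧ B = ⋃ i, f i}

/-- An indexing collection on a metric space `T`
(Ivanoff–Merzbach; Herbin–Merzbach, Definition 2.1). -/
structure IndexingCollection (T : Type*) [MetricSpace T] where
  carrier : Set (Set T)
  carrier_nonempty : carrier.Nonempty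
  isCompact_mem : ∀ A ∈ carrier, IsCompact A
  isPreconnected_mem : ∀ A ∈ carrier, IsPreconnected A
  empty_mem : ∅ ∈ carrier
  interior_ne : ∀ A ∈ carrier, A ≠ ∅ → A ≠ univ → interior A ≠ A
  B : ℕ → Set T
  B_mem : ∀ n, B n ∈ finUnions carrier
  B_mono : Monotone B
  iUnion_interior_B : (⋃ n, interior (B n)) = univ
  sInter_mem : ∀ 𝒜' ⊆ carrier, 𝒜'.Nonempty → ⋂₀ 𝒜' ∈ carrier
  inter_nonempty : ∀ A ∈ carrier, ∀ A' ∈ carrier, A.Nonempty → A'.Nonempty →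
    (A ∩ A').Nonempty
  chain_closure_mem : ∀ A : ℕ → Set T, (∀ i, A i ∈ carrier) → Monotone A →
    (∃ n, ∀ i, A i ⊆ B n) → closure (⋃ i, A i) ∈ carrier
  generateFrom_eq : MeasurableSpace.generateFrom carrier = borel T
  An : ℕ → Set (Set T)
  An_finite : ∀ n, (An n).Finite
  An_subset : ∀ n, An n ⊆ carrier
  An_mono : Monotone An
  An_inter_mem : ∀ n, ∀ A ∈ An n, ∀ A' ∈ An n, A ∩ A' ∈ An n
  empty_mem_Anu : ∀ n, (∅ : Set T) ∈ finUnions (An n)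
  B_mem_Anu : ∀ n, B n ∈ finUnions (An n)
  g : ℕ → Set T → Set T
  g_mem : ∀ n, ∀ A ∈ carrier, g n A ∈ finUnions (An n) ∪ {univ}
  g_sInter : ∀ n, ∀ 𝒜' ⊆ carrier, 𝒜'.Nonempty → g n (⋂₀ 𝒜') = ⋂ A ∈ 𝒜', g n A
  g_iUnion : ∀ n (k l : ℕ) (a : Fin k → Set T) (a' : Fin l → Set T),
    (∀ i, a i ∈ carrier) → (∀ j, a' j ∈ carrier) → (⋃ i, a i) = (⋃ j, a' j) →
    (⋃ i, g n (a i)) = ⋃ j, g n (a' j)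
  subset_interior_g : ∀ n, ∀ A ∈ carrier, A ⊆ interior (g n A)
  g_antitone : ∀ n l : ℕ, l ≤ n → ∀ A ∈ carrier, g n A ⊆ g l A
  iInter_g_eq : ∀ A ∈ carrier, A = ⋂ n, g n A
  g_inter_mem : ∀ n, ∀ A ∈ carrier, ∀ A' ∈ carrier, g n A ∩ A' ∈ carrier
  g_inter_mem_An : ∀ n, ∀ A ∈ carrier, ∀ A' ∈ An n, g n A ∩ A' ∈ An n
  g_empty : ∀ n, g n (∅ : Set T) = ∅
  iInter_eq_closure_iUnion : ∀ C : ℕ → Set T, (∀ i, C i ∈ finUnions carrier) →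
    ∃ D : ℕ → Set T, (∀ i, D i ∈ carrier) ∧ (⋂ i, C i) = closure (⋃ i, D i)

/-- An elementary flow on `[a, b]`: an increasing, outer- and inner-continuous map
into the indexing collection. -/
def IsElementaryFlow {T : Type*} [TopologicalSpace T] (𝒜 : Set (Set T)) (a b : ℝ)
    (f : ℝ → Set T) : Prop :=
  (∀ t ∈ Icc a b, f t ∈ 𝒜) ∧
  (∀ s ∈ Icc a b, ∀ t ∈ Icc a b, s < t → f s ⊆ f t) ∧
  (∀ s ∈ Ico a b, f s = ⋂ v ∈ Ioc s b, f v) ∧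
  (∀ s ∈ Ioc a b, f s = closure (⋃ u ∈ Ico a s, f u))

/-- An elementary flow defined on all of `ℝ₊`. -/
def IsElementaryFlowNN {T : Type*} [TopologicalSpace T] (𝒜 : Set (Set T))
    (f : ℝ → Set T) : Prop :=
  (∀ t, 0 ≤ t → f t ∈ 𝒜) ∧
  (∀ s t, 0 ≤ s → s < t → f s ⊆ f t) ∧
  (∀ s, 0 ≤ s → f s = ⋂ v ∈ Ioi s, f v) ∧
  (∀ s, 0 < s → f s = closure (⋃ u ∈ Ico 0 s, f u))

/-- `Y` is a centered (one-dimensional) Gaussian random variable. -/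
def IsCenteredGaussianRV {Ω : Type*} [MeasurableSpace Ω] (P : Measure Ω)
    (Y : Ω → ℝ) : Prop :=
  ∃ v : ℝ≥0, Measure.map Y P = gaussianReal 0 v

/-- Every finite real linear combination of values of the set-indexed process `X`
over `𝒜` is a centered Gaussian random variable. -/
def IsSetIndexedGaussian {T Ω : Type*} [MeasurableSpace Ω] (𝒜 : Set (Set T))
    (P : Measure Ω) (X : Set T → Ω → ℝ) : Prop :=
  ∀ (n : ℕ) (U : Fin n → Set T) (c : Fin n → ℝ), (∀ i, U i ∈ 𝒜) →
    IsCenteredGaussianRV P fun ω => ∑ i, c i * X (U i) ω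

/-- `X` is a set-indexed fractional Brownian motion of index `H` on `(T, 𝒜, m)`. -/
def IsSifBm {T Ω : Type*} [MeasurableSpace T] [MeasurableSpace Ω] (𝒜 : Set (Set T))
    (m : Measure T) (H : ℝ) (P : Measure Ω) (X : Set T → Ω → ℝ) : Prop :=
  IsSetIndexedGaussian 𝒜 P X ∧
  ∀ U ∈ 𝒜, ∀ V ∈ 𝒜,
    ∫ ω, X U ω * X V ω ∂P =
      (1 / 2) * ((m U).toReal ^ (2 * H) + (m V).toReal ^ (2 * H)
        - (m (U ∆ V)).toReal ^ (2 * H))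

/-- A one-parameter fractional Brownian motion of Hurst index `H` on the
interval `[a, b]`: a centered Gaussian process with the fBm covariance. -/
def IsFBmOn {Ω : Type*} [MeasurableSpace Ω] (P : Measure Ω) (H a b : ℝ)
    (Y : ℝ → Ω → ℝ) : Prop :=
  (∀ (n : ℕ) (t : Fin n → ℝ) (c : Fin n → ℝ), (∀ i, t i ∈ Icc a b) →
    IsCenteredGaussianRV P fun ω => ∑ i, c i * Y (t i) ω) ∧
  ∀ s ∈ Icc a b, ∀ t ∈ Icc a b,
    ∫ ω, Y s ω * Y t ω ∂P = (1 / 2) * (s ^ (2 * H) + t ^ (2 * H) - |t - s| ^ (2 * H))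

/-- `X` is an additive set-indexed process: `X_∅ = 0` a.s. and
`X_{U ∪ V} = X_U + X_V - X_{U ∩ V}` a.s. on `𝒜(u)`. -/
def IsAdditiveProcess {T Ω : Type*} [MeasurableSpace Ω] (𝒜 : Set (Set T))
    (P : Measure Ω) (X : Set T → Ω → ℝ) : Prop :=
  (∀ᵐ ω ∂P, X ∅ ω = 0) ∧
  ∀ U ∈ finUnions 𝒜, ∀ V ∈ finUnions 𝒜,
    ∀ᵐ ω ∂P, X (U ∪ V) ω = X U ω + X V ω - X (U ∩ V) ω

/-- `X` is `L²`-monotone outer-continuous. -/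
def L2MonotoneOuterContinuous {T Ω : Type*} [MeasurableSpace Ω] (𝒜 : Set (Set T))
    (P : Measure Ω) (X : Set T → Ω → ℝ) : Prop :=
  ∀ U : ℕ → Set T, (∀ n, U n ∈ 𝒜) → Antitone U →
    Tendsto (fun n => ∫ ω, (X (U n) ω - X (⋂ k, U k) ω) ^ 2 ∂P) atTop (nhds 0)

/-- `X` has `m`-stationary `𝒞₀`-increments (Herbin–Merzbach, Definition 5.2). -/
def HasMStationaryC0Increments {T Ω : Type*} [MeasurableSpace T] [MeasurableSpace Ω]
    (𝒜 : Set (Set T)) (m : Measure T) (P : Measure Ω) (X : Set T → Ω → ℝ) : Prop :=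
  ∀ (n : ℕ) (V : Set T), V ∈ 𝒜 → ∀ U A : Fin n → Set T,
    (∀ i, U i ∈ 𝒜) → (∀ i, A i ∈ 𝒜) →
    (∀ i j : Fin n, i ≤ j → U i ⊆ U j) → (∀ i j : Fin n, i ≤ j → A i ⊆ A j) →
    (∀ i, V ⊆ U i) →
    (∀ i, m (U i \ V) = m (A i)) →
    Measure.map (fun ω (i : Fin n) => X (U i) ω - X V ω) P
      = Measure.map (fun ω (i : Fin n) => X (A i) ω) P

/-- The range of the time change `θ : t ↦ m(f(t))` along a flow defined on `ℝ₊`. -/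
def flowRange {T : Type*} [MeasurableSpace T] (m : Measure T) (f : ℝ → Set T) : Set ℝ :=
  (fun s => (m (f s)).toReal) '' Ici (0 : ℝ)

/-- the `m`-standard projection of a set-indexed fractional Brownian
motion of index `H ∈ (0, 1/2]` on any elementary flow is a one-parameter
fractional Brownian motion of Hurst index `H`. -/
theorem sifBm_mStandardProjection_isFBm
    {T : Type*} [MetricSpace T] [LocallyCompactSpace T] [MeasurableSpace T] [BorelSpace T]
    (I : IndexingCollection T) (m : Measure T) [m.Regular]
    {Ω : Type*} [MeasurableSpace Ω] (P : Measure Ω) [IsProbabilityMeasure P]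
    {H : ℝ} (hH : H ∈ Ioc (0 : ℝ) (1 / 2))
    (X : Set T → Ω → ℝ) (hX : IsSifBm I.carrier m H P X)
    {a b : ℝ} (hab : a ≤ b) (f : ℝ → Set T) (hf : IsElementaryFlow I.carrier a b f)
    (τ : ℝ → ℝ)
    (hτ : ∀ t ∈ Icc ((m (f a)).toReal) ((m (f b)).toReal),
      τ t ∈ Icc a b ∧ (m (f (τ t))).toReal = t) :
    IsFBmOn P H ((m (f a)).toReal) ((m (f b)).toReal) (fun t ω => X (f (τ t)) ω) := by
  obtain ⟨hXg, hXcov⟩ := hX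
  obtain ⟨hmem, hmono, _, _⟩ := hf
  have key : ∀ u v : ℝ, u ∈ Icc a b → v ∈ Icc a b → f u ⊆ f v →
      (m (f u ∆ f v)).toReal = (m (f v)).toReal - (m (f u)).toReal := by
    intro u v hu hv hsub
    have hcu : IsCompact (f u) := I.isCompact_mem _ (hmem _ hu)
    have hcv : IsCompact (f v) := I.isCompact_mem _ (hmem _ hv)
    rw [symmDiff_of_le hsub,
      measure_diff hsub hcu.isClosed.measurableSet.nullMeasurableSet hcu.measure_lt_top.ne,
      ENNReal.toReal_sub_of_le (measure_mono hsub) hcv.measure_lt_top.ne]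
  constructor
  · intro n t c ht
    exact hXg n (fun i => f (τ (t i))) c (fun i => hmem _ (hτ _ (ht i)).1)
  · intro s hs t ht
    obtain ⟨hτs, hms⟩ := hτ s hs
    obtain ⟨hτt, hmt⟩ := hτ t ht
    rw [hXcov _ (hmem _ hτs) _ (hmem _ hτt), hms, hmt]
    have hdiff : (m (f (τ s) ∆ f (τ t))).toReal = |t - s| := by
      rcases lt_trichotomy (τ s) (τ t) with h | h | h
      · have hsub := hmono _ hτs _ hτt h
        rw [key _ _ hτs hτt hsub, hms, hmt]
        have hle : s ≤ t := by
          rw [← hms, ← hmt]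
          exact ENNReal.toReal_mono
            (I.isCompact_mem _ (hmem _ hτt)).measure_lt_top.ne (measure_mono hsub)
        rw [abs_of_nonneg (sub_nonneg.2 hle)]
      · have hst : s = t := by rw [← hms, ← hmt, h]
        rw [h, symmDiff_self, hst]
        simp
      · have hsub := hmono _ hτt _ hτs h
        rw [symmDiff_comm, key _ _ hτt hτs hsub, hms, hmt]
        have hle : t ≤ s := by
          rw [← hms, ← hmt]
          exact ENNReal.toReal_mono
            (I.isCompact_mem _ (hmem _ hτs)).measure_lt_top.ne (measure_mono hsub)
        rw [abs_sub_comm, abs_of_nonneg (sub_nonneg.2 hle)]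
    rw [hdiff]
end
end

section
/- Let m be Lebesgue measure on ℝ², and for t ∈ ℝ²₊ let [0,t] denote the closed rectangle with opposite corners 0 and t. Set U₁ = [0,(1,1)], U₂ = [0,(2,1)], U₃ = [0,(1,2)], U₄ = [0,(2,2)] and, for H = 3/4, Φ^H(U,V) = ½ (m(U)^{2H} + m(V)^{2H} − m(U △ V)^{2H}). Then the 4×4 matrix (Φ^{3/4}(U_i, U_j))_{1≤i,j≤4} is not positive semidefinite: there exists c ∈ ℝ⁴ with ∑_{i,j} c_i c_j Φ^{3/4}(U_i, U_j) < 0. Consequently, the kernel Φ^{3/4} on the collection 𝒜 = {[0,t] : t ∈ ℝ²₊} ∪ {∅} is not positive semidefinite, and there exists no centered Gaussian process {X_U : U ∈ 𝒜} with E[X_U X_V] = Φ^{3/4}(U,V); i.e. the set-indexed fractional Brownian motion of index H = 3/4 cannot be defined on (ℝ²₊, 𝒜, Lebesgue). -/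
open Set MeasureTheory ProbabilityTheory Filter
open scoped NNReal ENNReal symmDiff

noncomputable section

/-- The indexing collection of rectangles `[0, t]`, `t ∈ ℝ²₊`, together with `∅`. -/
def rectCollection : Set (Set (ℝ × ℝ)) :=
  {A | ∃ t : ℝ × ℝ, 0 ≤ t.1 ∧ 0 ≤ t.2 ∧ A = Icc (0, 0) t} ∪ {∅}

/-- The sifBm kernel `Φ^{3/4}` on subsets of `ℝ²` (Lebesgue measure, `2H = 3/2`). -/
def Phi34 (U V : Set (ℝ × ℝ)) : ℝ :=
  (1 / 2) * ((volume U).toReal ^ (3 / 2 : ℝ) + (volume V).toReal ^ (3 / 2 : ℝ)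
    - (volume (U ∆ V)).toReal ^ (3 / 2 : ℝ))

/-- The four rectangles `[0,(1,1)]`, `[0,(2,1)]`, `[0,(1,2)]`, `[0,(2,2)]`. -/
def rect : Fin 4 → Set (ℝ × ℝ) :=
  ![Icc (0, 0) (1, 1), Icc (0, 0) (2, 1), Icc (0, 0) (1, 2), Icc (0, 0) (2, 2)]

/-- Helper: volume of a closed rectangle `[0,(a,b)]` in `ℝ²`. -/
lemma vol_rect_aux (a b : ℝ) (ha : 0 ≤ a) :
    volume (Icc ((0:ℝ), (0:ℝ)) (a, b)) = ENNReal.ofReal (a * b) := by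
  rw [← Icc_prod_Icc, Measure.volume_eq_prod, Measure.prod_prod, Real.volume_Icc,
    Real.volume_Icc, sub_zero, sub_zero, ENNReal.ofReal_mul ha]

lemma vol_sdiff_aux {A B : Set (ℝ × ℝ)} (h : B ⊆ A) (hB : MeasurableSet B)
    {a b : ℝ} (hab : 0 ≤ b) (hA : volume A = ENNReal.ofReal a)
    (hBv : volume B = ENNReal.ofReal b) :
    volume (A \ B) = ENNReal.ofReal (a - b) := by
  rw [measure_diff h hB.nullMeasurableSet (by rw [hBv]; exact ENNReal.ofReal_ne_top),
    hA, hBv, ← ENNReal.ofReal_sub _ hab]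

/-- The witness vector for non-positive-semidefiniteness. -/
def negc : Fin 4 → ℝ := ![1, -1, -1, 1]

lemma neg_form : ∑ i, ∑ j, negc i * negc j * Phi34 (rect i) (rect j) < 0 := by
  have prle : ∀ a b c d : ℝ, a ≤ c → b ≤ d → ((a, b) : ℝ × ℝ) ≤ (c, d) := by
    intro a b c d h1 h2; exact ⟨h1, h2⟩
  have h0 : volume (rect 0) = ENNReal.ofReal 1 := by
    show volume (Icc (0,0) (1,1)) = _; rw [vol_rect_aux _ _ (by norm_num)]; norm_num
  have h1 : volume (rect 1) = ENNReal.ofReal 2 := by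
    show volume (Icc (0,0) (2,1)) = _; rw [vol_rect_aux _ _ (by norm_num)]; norm_num
  have h2 : volume (rect 2) = ENNReal.ofReal 2 := by
    show volume (Icc (0,0) (1,2)) = _; rw [vol_rect_aux _ _ (by norm_num)]; norm_num
  have h3 : volume (rect 3) = ENNReal.ofReal 4 := by
    show volume (Icc (0,0) (2,2)) = _; rw [vol_rect_aux _ _ (by norm_num)]; norm_num
  have s01 : rect 0 ⊆ rect 1 := Icc_subset_Icc le_rfl (prle 1 1 2 1 (by norm_num) le_rfl)
  have s02 : rect 0 ⊆ rect 2 := Icc_subset_Icc le_rfl (prle 1 1 1 2 le_rfl (by norm_num))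
  have s03 : rect 0 ⊆ rect 3 := Icc_subset_Icc le_rfl (prle 1 1 2 2 (by norm_num) (by norm_num))
  have s13 : rect 1 ⊆ rect 3 := Icc_subset_Icc le_rfl (prle 2 1 2 2 le_rfl (by norm_num))
  have s23 : rect 2 ⊆ rect 3 := Icc_subset_Icc le_rfl (prle 1 2 2 2 (by norm_num) le_rfl)
  have hm : ∀ i, MeasurableSet (rect i) := by
    intro i; fin_cases i <;> exact measurableSet_Icc
  have d01 : volume (rect 0 ∆ rect 1) = ENNReal.ofReal 1 := by
    rw [symmDiff_of_le s01, vol_sdiff_aux s01 (hm 0) (by norm_num) h1 h0]; norm_num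
  have d02 : volume (rect 0 ∆ rect 2) = ENNReal.ofReal 1 := by
    rw [symmDiff_of_le s02, vol_sdiff_aux s02 (hm 0) (by norm_num) h2 h0]; norm_num
  have d03 : volume (rect 0 ∆ rect 3) = ENNReal.ofReal 3 := by
    rw [symmDiff_of_le s03, vol_sdiff_aux s03 (hm 0) (by norm_num) h3 h0]; norm_num
  have d13 : volume (rect 1 ∆ rect 3) = ENNReal.ofReal 2 := by
    rw [symmDiff_of_le s13, vol_sdiff_aux s13 (hm 1) (by norm_num) h3 h1]; norm_num
  have d23 : volume (rect 2 ∆ rect 3) = ENNReal.ofReal 2 := by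
    rw [symmDiff_of_le s23, vol_sdiff_aux s23 (hm 2) (by norm_num) h3 h2]; norm_num
  have hinter : rect 1 ∩ rect 2 = rect 0 := by
    show Icc ((0:ℝ),(0:ℝ)) (2,1) ∩ Icc (0,0) (1,2) = Icc (0,0) (1,1)
    rw [Icc_inter_Icc]
    rw [show ((0:ℝ),(0:ℝ)) ⊔ ((0:ℝ),(0:ℝ)) = ((0:ℝ),(0:ℝ)) by simp,
      show ((2:ℝ),(1:ℝ)) ⊓ ((1:ℝ),(2:ℝ)) = ((1:ℝ),(1:ℝ)) by
        simp [Prod.ext_iff, min_def]]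
  have d12 : volume (rect 1 ∆ rect 2) = ENNReal.ofReal 2 := by
    rw [Set.symmDiff_def]
    rw [measure_union ?dj ((hm 2).diff (hm 1))]
    case dj => exact disjoint_sdiff_sdiff
    have e1 : rect 1 \ rect 2 = rect 1 \ rect 0 := by rw [← hinter, Set.diff_self_inter]
    have e2 : rect 2 \ rect 1 = rect 2 \ rect 0 := by
      rw [← hinter, Set.inter_comm, Set.diff_self_inter]
    rw [e1, e2, vol_sdiff_aux s01 (hm 0) (by norm_num) h1 h0,
      vol_sdiff_aux s02 (hm 0) (by norm_num) h2 h0,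
      ← ENNReal.ofReal_add (by norm_num) (by norm_num)]
    norm_num
  have dii : ∀ i, volume (rect i ∆ rect i) = 0 := by
    intro i; rw [symmDiff_self]; simp
  have rpow32 : ∀ x : ℝ, 0 ≤ x → x ^ (3 / 2 : ℝ) = Real.sqrt (x ^ 3) := by
    intro x hx
    rw [show (3 / 2 : ℝ) = (3 : ℕ) * (1 / 2) by norm_num, Real.rpow_mul hx,
      Real.rpow_natCast, Real.sqrt_eq_rpow]
  have sq8 : Real.sqrt 8 ^ 2 = 8 := Real.sq_sqrt (by norm_num)
  have sq27 : Real.sqrt 27 ^ 2 = 27 := Real.sq_sqrt (by norm_num)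
  have s8nn : 0 ≤ Real.sqrt 8 := Real.sqrt_nonneg 8
  have s27nn : 0 ≤ Real.sqrt 27 := Real.sqrt_nonneg 27
  have sym : ∀ i j : Fin 4, rect j ∆ rect i = rect i ∆ rect j := fun i j => symmDiff_comm _ _
  simp only [Fin.sum_univ_four, Phi34, negc]
  rw [sym 0 1, sym 0 2, sym 0 3, sym 1 2, sym 1 3, sym 2 3]
  rw [d01, d02, d03, d12, d13, d23, dii 0, dii 1, dii 2, dii 3, h0, h1, h2, h3]
  norm_num
  rw [rpow32 2 (by norm_num), rpow32 3 (by norm_num)]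
  norm_num [Matrix.cons_val_two, Matrix.vecHead, Matrix.vecTail,
    show (![1, -1, -1, 1] : Fin 4 → ℝ) 3 = 1 from rfl]
  nlinarith [sq8, sq27, s8nn, s27nn, sq_nonneg (Real.sqrt 27 - Real.sqrt 8 - 2),
    sq_nonneg (4 * Real.sqrt 8 - 15)]

lemma rect_mem_rectCollection : ∀ i, rect i ∈ rectCollection := by
  intro i
  fin_cases i
  · exact Or.inl ⟨((1:ℝ), (1:ℝ)), by norm_num, by norm_num, rfl⟩
  · exact Or.inl ⟨((2:ℝ), (1:ℝ)), by norm_num, by norm_num, rfl⟩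
  · exact Or.inl ⟨((1:ℝ), (2:ℝ)), by norm_num, by norm_num, rfl⟩
  · exact Or.inl ⟨((2:ℝ), (2:ℝ)), by norm_num, by norm_num, rfl⟩

lemma integrable_sq_gaussianReal (v : ℝ≥0) :
    Integrable (fun x : ℝ => x ^ 2) (gaussianReal 0 v) := by
  rcases eq_or_ne v 0 with hv | hv
  · rw [hv, gaussianReal_zero_var]
    refine ⟨(measurable_id.pow_const 2).aestronglyMeasurable, ?_⟩
    simp [HasFiniteIntegral, lintegral_dirac]
  · rw [gaussianReal_of_var_ne_zero _ hv, gaussianPDF_def]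
    rw [integrable_withDensity_iff (measurable_gaussianPDFReal 0 v).ennreal_ofReal
      (ae_of_all _ fun x => ENNReal.ofReal_lt_top)]
    have hvpos : (0:ℝ) < (v:ℝ) := by positivity
    have heq : (fun x : ℝ => x ^ 2 * (ENNReal.ofReal (gaussianPDFReal 0 v x)).toReal)
        = fun x : ℝ => (Real.sqrt (2 * Real.pi * v))⁻¹
          * (x ^ 2 * Real.exp (-(2 * v)⁻¹ * x ^ 2)) := by
      funext x
      rw [ENNReal.toReal_ofReal (gaussianPDFReal_nonneg 0 v x), gaussianPDFReal]
      rw [show -(x - 0) ^ 2 / (2 * (v:ℝ)) = -(2 * (v:ℝ))⁻¹ * x ^ 2 by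
        rw [div_eq_inv_mul]; push_cast; ring]
      push_cast
      ring
    rw [heq]
    have h2 := integrable_rpow_mul_exp_neg_mul_sq (b := (2 * (v:ℝ))⁻¹) (by positivity)
      (s := ((2:ℕ):ℝ)) (by norm_num)
    simp only [Real.rpow_natCast] at h2
    exact h2.const_mul _

lemma gauss_props {Ω : Type*} [MeasurableSpace Ω] {P : Measure Ω} {Y : Ω → ℝ}
    (h : IsCenteredGaussianRV P Y) :
    AEMeasurable Y P ∧ Integrable (fun ω => Y ω ^ 2) P := by
  obtain ⟨v, hv⟩ := h
  have hY : AEMeasurable Y P := aemeasurable_of_map_neZero (by rw [hv]; infer_instance)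
  refine ⟨hY, ?_⟩
  have hint : Integrable (fun x : ℝ => x ^ 2) (Measure.map Y P) := by
    rw [hv]; exact integrable_sq_gaussianReal v
  exact (integrable_map_measure ((measurable_id.pow_const 2).aestronglyMeasurable) hY).mp hint

/-- for `H = 3/4`, the matrix `(Φ^{3/4}(U_i, U_j))` of the four
rectangles is not positive semidefinite; consequently the kernel `Φ^{3/4}` is not
positive semidefinite on the collection of rectangles of `ℝ²₊`, and no centered
Gaussian process indexed by this collection has covariance `Φ^{3/4}`: the sifBm of
index `3/4` cannot be defined on `(ℝ²₊, 𝒜, Lebesgue)`. -/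

theorem sifBm_H34_not_definable_on_rectangles :
    (∃ c : Fin 4 → ℝ, ∑ i, ∑ j, c i * c j * Phi34 (rect i) (rect j) < 0) ∧
    ¬(∀ (n : ℕ) (U : Fin n → Set (ℝ × ℝ)) (c : Fin n → ℝ),
        (∀ i, U i ∈ rectCollection) →
        0 ≤ ∑ i, ∑ j, c i * c j * Phi34 (U i) (U j)) ∧
    ¬∃ (Ω : Type) (_ : MeasurableSpace Ω) (P : Measure Ω)
        (_ : IsProbabilityMeasure P) (X : Set (ℝ × ℝ) → Ω → ℝ),
        IsSetIndexedGaussian rectCollection P X ∧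
        ∀ U ∈ rectCollection, ∀ V ∈ rectCollection,
          ∫ ω, X U ω * X V ω ∂P = Phi34 U V := by
  refine ⟨⟨negc, neg_form⟩, ?_, ?_⟩
  · intro h
    have := h 4 rect negc rect_mem_rectCollection
    linarith [neg_form]
  · rintro ⟨Ω, mΩ, P, hP, X, hG, hC⟩
    have hYi : ∀ i : Fin 4, AEMeasurable (X (rect i)) P
        ∧ Integrable (fun ω => X (rect i) ω ^ 2) P := by
      intro i
      have h1 := hG 1 ![rect i] ![1] (by intro j; fin_cases j; exact rect_mem_rectCollection i)
      have he : (fun ω => ∑ j : Fin 1, (![1] : Fin 1 → ℝ) j * X ((![rect i]) j) ω)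
          = X (rect i) := by funext ω; simp
      rw [he] at h1
      exact gauss_props h1
    have hmul : ∀ i j : Fin 4, Integrable (fun ω => X (rect i) ω * X (rect j) ω) P := by
      intro i j
      refine Integrable.mono' (((hYi i).2.add (hYi j).2).const_mul (1/2))
        (((hYi i).1.mul (hYi j).1).aestronglyMeasurable) (ae_of_all _ fun ω => ?_)
      simp only [Pi.add_apply]
      rw [Real.norm_eq_abs, abs_mul]
      nlinarith [sq_nonneg (|X (rect i) ω| - |X (rect j) ω|), sq_abs (X (rect i) ω),
        sq_abs (X (rect j) ω), abs_nonneg (X (rect i) ω), abs_nonneg (X (rect j) ω)]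
    have hiij : ∀ i j : Fin 4,
        Integrable (fun ω => negc i * X (rect i) ω * (negc j * X (rect j) ω)) P := by
      intro i j
      have e : (fun ω => negc i * X (rect i) ω * (negc j * X (rect j) ω))
          = fun ω => (negc i * negc j) * (X (rect i) ω * X (rect j) ω) := by funext ω; ring
      rw [e]; exact (hmul i j).const_mul _
    have hkey : ∫ ω, (∑ i, negc i * X (rect i) ω) ^ 2 ∂P
        = ∑ i, ∑ j, negc i * negc j * Phi34 (rect i) (rect j) := by
      have hsq : (fun ω => (∑ i, negc i * X (rect i) ω) ^ 2)
          = fun ω => ∑ i, ∑ j, negc i * X (rect i) ω * (negc j * X (rect j) ω) := by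
        funext ω; rw [sq, Finset.sum_mul_sum]
      rw [hsq, integral_finset_sum _ fun i _ => integrable_finset_sum _ fun j _ => hiij i j]
      refine Finset.sum_congr rfl fun i _ => ?_
      rw [integral_finset_sum _ fun j _ => hiij i j]
      refine Finset.sum_congr rfl fun j _ => ?_
      have e : (fun ω => negc i * X (rect i) ω * (negc j * X (rect j) ω))
          = fun ω => (negc i * negc j) * (X (rect i) ω * X (rect j) ω) := by funext ω; ring
      rw [e, integral_const_mul,
        hC _ (rect_mem_rectCollection i) _ (rect_mem_rectCollection j), mul_assoc]
    have h0 : (0:ℝ) ≤ ∫ ω, (∑ i, negc i * X (rect i) ω) ^ 2 ∂P :=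
      integral_nonneg fun ω => sq_nonneg _
    rw [hkey] at h0
    linarith [neg_form]
end
end

section
/- Let 𝒜 be an indexing collection on a locally compact metric space T with Radon measure m, let G be a nontrivial group acting on 𝒜 with g·(U ∪ V) = g·U ∪ g·V and g·(U \ V) = g·U \ g·V, and let μ : G → (0, ∞) be a surjective map with m(g·U) = μ(g)·m(U) for all g ∈ G and U ∈ 𝒜. Let X = {X_U : U ∈ 𝒜} be a set-indexed process that (1) is self-similar of index H with respect to G, i.e. for every g ∈ G the processes {X_{g·U} : U ∈ 𝒜} and {μ(g)^H X_U : U ∈ 𝒜} have the same finite-dimensional distributions, and (2) has m-stationary 𝒞₀-increments. Then for every elementary flow f : ℝ₊ → 𝒜, the m-standard projection X^{f,m} is self-similar of index H: for every a > 0 and all t_1, …, t_n in ℝ₊ such that t_1, …, t_n and a·t_1, …, a·t_n lie in the range of θ : t ↦ m(f(t)), the random vectors (X^{f,m}_{a t_1}, …, X^{f,m}_{a t_n}) and (a^H X^{f,m}_{t_1}, …, a^H X^{f,m}_{t_n}) have the same distribution, where X^{f,m}_t = X_{f(θ^{-1}(t))} and θ^{-1} is the pseudo-inverse of θ (so θ(θ^{-1}(t))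 = t for t in the range of θ). -/
open Set MeasureTheory ProbabilityTheory Filter
open scoped NNReal ENNReal symmDiff

noncomputable section

/-- if a set-indexed process is self-similar of index `H` (with
respect to the action of a nontrivial group `G` on `𝒜` compatible with unions,
set-differences and the measure via a surjective `μ : G → (0, ∞)`) and has
`m`-stationary `𝒞₀`-increments, then its `m`-standard projection on every
elementary flow is self-similar of index `H`. -/
theorem mStandardProjection_selfSimilar
    {T : Type*} [MetricSpace T] [LocallyCompactSpace T] [MeasurableSpace T] [BorelSpace T]
    (I : IndexingCollection T) (m : Measure T) [m.Regular]
    {Ω : Type*} [MeasurableSpace Ω] (P : Measure Ω) [IsProbabilityMeasure P]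
    {G : Type*} [Group G] [Nontrivial G] (act : G → Set T → Set T)
    (hact_one : ∀ U ∈ I.carrier, act 1 U = U)
    (hact_mul : ∀ g h : G, ∀ U ∈ I.carrier, act (g * h) U = act g (act h U))
    (hact_mem : ∀ g : G, ∀ U ∈ I.carrier, act g U ∈ I.carrier)
    (hact_union : ∀ (g : G) (U V : Set T), act g (U ∪ V) = act g U ∪ act g V)
    (hact_diff : ∀ (g : G) (U V : Set T), act g (U \ V) = act g U \ act g V)
    (μ : G → ℝ) (hμ_pos : ∀ g, 0 < μ g) (hμ_surj : ∀ r : ℝ, 0 < r → ∃ g, μ g = r)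
    (hμ_meas : ∀ g : G, ∀ U ∈ I.carrier, m (act g U) = ENNReal.ofReal (μ g) * m U)
    (H : ℝ) (X : Set T → Ω → ℝ) (hXmeas : ∀ U ∈ I.carrier, Measurable (X U))
    (hself : ∀ g : G, ∀ (n : ℕ) (U : Fin n → Set T), (∀ i, U i ∈ I.carrier) →
      Measure.map (fun ω (i : Fin n) => X (act g (U i)) ω) P
        = Measure.map (fun ω (i : Fin n) => μ g ^ H * X (U i) ω) P)
    (hstat : HasMStationaryC0Increments I.carrier m P X) :
    ∀ f : ℝ → Set T, IsElementaryFlowNN I.carrier f →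
      ∀ τ : ℝ → ℝ,
        (∀ t ∈ flowRange m f, 0 ≤ τ t ∧ (m (f (τ t))).toReal = t) →
        ∀ a : ℝ, 0 < a → ∀ (n : ℕ) (t : Fin n → ℝ),
          (∀ i, t i ∈ flowRange m f) → (∀ i, a * t i ∈ flowRange m f) →
          Measure.map (fun ω (i : Fin n) => X (f (τ (a * t i))) ω) P
            = Measure.map (fun ω (i : Fin n) => a ^ H * X (f (τ (t i))) ω) P := by
  intro f hf τ hτ a ha n t ht hat
  obtain ⟨hfmem, hfmono, _, _⟩ := hf
  have hact_mono : ∀ (g : G) (U V : Set T), U ⊆ V → act g U ⊆ act g V := by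
    intro g U V h
    calc act g U ⊆ act g U ∪ act g V := subset_union_left
      _ = act g (U ∪ V) := (hact_union g U V).symm
      _ = act g V := by rw [union_eq_self_of_subset_left h]
  have hfin : ∀ s, 0 ≤ s → m (f s) ≠ ⊤ := fun s hs =>
    (I.isCompact_mem _ (hfmem s hs)).measure_lt_top.ne
  have hsub : ∀ s ∈ flowRange m f, ∀ u ∈ flowRange m f, s ≤ u → f (τ s) ⊆ f (τ u) := by
    intro s hs u hu hsu
    obtain ⟨hτs, hθs⟩ := hτ s hs
    obtain ⟨hτu, hθu⟩ := hτ u hu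
    rcases lt_trichotomy (τ s) (τ u) with h | h | h
    · exact hfmono _ _ hτs h
    · rw [h]
    · exfalso
      have hsub2 : f (τ u) ⊆ f (τ s) := hfmono _ _ hτu h
      have hle : u ≤ s := by
        rw [← hθs, ← hθu]
        exact ENNReal.toReal_mono (hfin _ hτs) (measure_mono hsub2)
      have heq : s = u := le_antisymm hsu hle
      rw [heq] at h; exact lt_irrefl _ h
  -- sorted case
  have key : ∀ s : Fin n → ℝ, Monotone s → (∀ i, s i ∈ flowRange m f) →
      (∀ i, a * s i ∈ flowRange m f) →
      Measure.map (fun ω (i : Fin n) => X (f (τ (a * s i))) ω) P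
        = Measure.map (fun ω (i : Fin n) => a ^ H * X (f (τ (s i))) ω) P := by
    intro s hmono hs has
    obtain ⟨g, hg⟩ := hμ_surj a ha
    have hmemU : ∀ i, f (τ (s i)) ∈ I.carrier := fun i => hfmem _ (hτ _ (hs i)).1
    have hmemA : ∀ i, f (τ (a * s i)) ∈ I.carrier := fun i => hfmem _ (hτ _ (has i)).1
    have hUmem : ∀ i, act g (f (τ (s i))) ∈ I.carrier := fun i => hact_mem g _ (hmemU i)
    have hUmono : ∀ i j : Fin n, i ≤ j → act g (f (τ (s i))) ⊆ act g (f (τ (s j))) :=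
      fun i j hij => hact_mono g _ _ (hsub _ (hs i) _ (hs j) (hmono hij))
    have hAmono : ∀ i j : Fin n, i ≤ j → f (τ (a * s i)) ⊆ f (τ (a * s j)) :=
      fun i j hij => hsub _ (has i) _ (has j) (mul_le_mul_of_nonneg_left (hmono hij) ha.le)
    have hfinU : ∀ i, m (act g (f (τ (s i)))) ≠ ⊤ := by
      intro i
      rw [hμ_meas g _ (hmemU i)]
      exact ENNReal.mul_ne_top ENNReal.ofReal_ne_top (hfin _ (hτ _ (hs i)).1)
    have hmeq : ∀ i, m (act g (f (τ (s i))) \ ∅) = m (f (τ (a * s i))) := by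
      intro i
      rw [diff_empty]
      rw [← ENNReal.toReal_eq_toReal_iff' (hfinU i) (hfin _ (hτ _ (has i)).1)]
      rw [hμ_meas g _ (hmemU i), ENNReal.toReal_mul, ENNReal.toReal_ofReal (hμ_pos g).le,
        (hτ _ (hs i)).2, (hτ _ (has i)).2, hg]
    have step1 := hstat n ∅ I.empty_mem (fun i => act g (f (τ (s i))))
      (fun i => f (τ (a * s i))) hUmem hmemA hUmono hAmono (fun i => empty_subset _) hmeq
    have step2 := hstat n ∅ I.empty_mem (fun i => act g (f (τ (s i))))
      (fun i => act g (f (τ (s i)))) hUmem hUmem hUmono hUmono (fun i => empty_subset _)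
      (fun i => by rw [diff_empty])
    have step3 := hself g n (fun i => f (τ (s i))) hmemU
    rw [hg] at step3
    exact step1.symm.trans (step2.trans step3)
  -- reduce general case to sorted case via a sorting permutation
  set σ := Tuple.sort t with hσ
  have hmono : Monotone (t ∘ σ) := Tuple.monotone_sort t
  have hkey := key (t ∘ σ) hmono (fun i => ht _) (fun i => hat _)
  have hΦmeas : Measurable (fun x : Fin n → ℝ => fun i => x (σ⁻¹ i)) :=
    measurable_pi_lambda _ fun i => measurable_pi_apply _
  have hinner1 : Measurable (fun ω (i : Fin n) => X (f (τ (a * (t ∘ σ) i))) ω) :=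
    measurable_pi_lambda _ fun i => hXmeas _ (hfmem _ (hτ _ (hat _)).1)
  have hinner2 : Measurable (fun ω (i : Fin n) => a ^ H * X (f (τ ((t ∘ σ) i))) ω) :=
    measurable_pi_lambda _ fun i => (hXmeas _ (hfmem _ (hτ _ (ht _)).1)).const_mul _
  have e1 : (fun ω (i : Fin n) => X (f (τ (a * t i))) ω)
      = (fun x : Fin n → ℝ => fun i => x (σ⁻¹ i)) ∘
        (fun ω (i : Fin n) => X (f (τ (a * (t ∘ σ) i))) ω) := by
    funext ω
    funext i
    simp [Function.comp, Equiv.Perm.inv_def, Equiv.apply_symm_apply]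
  have e2 : (fun ω (i : Fin n) => a ^ H * X (f (τ (t i))) ω)
      = (fun x : Fin n → ℝ => fun i => x (σ⁻¹ i)) ∘
        (fun ω (i : Fin n) => a ^ H * X (f (τ ((t ∘ σ) i))) ω) := by
    funext ω
    funext i
    simp [Function.comp, Equiv.Perm.inv_def, Equiv.apply_symm_apply]
  rw [e1, e2, ← Measure.map_map hΦmeas hinner1, ← Measure.map_map hΦmeas hinner2, hkey]
end
end
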